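/- arXiv:math/9907210 — 2 statements merged into one kernel-verified Lean document; each statement's English description precedes it below -/
import Mathlib

section
/- (Proposition 4, necessary equations for harmonic compositions.) Let Ω ⊆ ℂ be open, let f₁, f₂ : ℂ → ℂ be entire (complex differentiable) functions, and let h : Ω → ℂ be a twice continuously real-differentiable function that is harmonic in the sense ∂∂̄h = 0 on Ω. Suppose the compositions ψ₁ = f₁ ∘ h and ψ₂ = f₂ ∘ h solve the generalized Weierstrass–Enneper system ∂ψ₁ = p ψ₂, ∂̄ψ₂ = −p ψ₁ on Ω, where p = |ψ₁|² + |ψ₂|². Then at every point of Ω the equations f₁''(h) · (∂h)(∂̄h) = (∂̄p) · f₂(h) + p · f₂'(h) · ∂̄h and f₂''(h) · (∂h)(∂̄h) = −(∂p) · f₁(h) − p · f₁'(h) · ∂h hold. -/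
open Complex

/-- The Wirtinger derivative ∂f = (1/2)(∂f/∂x − i ∂f/∂y) of a real-differentiable
function `f : ℂ → ℂ`. -/
noncomputable def wD (f : ℂ → ℂ) (z : ℂ) : ℂ :=
  (1 / 2 : ℂ) * (fderiv ℝ f z 1 - Complex.I * fderiv ℝ f z Complex.I)

/-- The conjugate Wirtinger derivative ∂̄f = (1/2)(∂f/∂x + i ∂f/∂y). -/
noncomputable def wDbar (f : ℂ → ℂ) (z : ℂ) : ℂ :=
  (1 / 2 : ℂ) * (fderiv ℝ f z 1 + Complex.I * fderiv ℝ f z Complex.I)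

section Snd
variable {h : ℂ → ℂ} {z : ℂ}

theorem diff_fderiv_apply (hh : ContDiffAt ℝ 2 h z) (v : ℂ) :
    DifferentiableAt ℝ (fun w => fderiv ℝ h w v) z := by
  have h1 : ContDiffAt ℝ 1 (fderiv ℝ h) z := hh.fderiv_right (by norm_num)
  have h2 : DifferentiableAt ℝ (fderiv ℝ h) z := h1.differentiableAt one_ne_zero
  exact (h2.clm_apply (differentiableAt_const v))

theorem fderiv_fderiv_apply (hh : ContDiffAt ℝ 2 h z) (u v : ℂ) :
    fderiv ℝ (fun w => fderiv ℝ h w v) z u = fderiv ℝ (fderiv ℝ h) z u v := by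
  have h1 : ContDiffAt ℝ 1 (fderiv ℝ h) z := hh.fderiv_right (by norm_num)
  have h2 : DifferentiableAt ℝ (fderiv ℝ h) z := h1.differentiableAt one_ne_zero
  rw [fderiv_clm_apply h2 (differentiableAt_const v)]
  simp

theorem diff_wD (hh : ContDiffAt ℝ 2 h z) : DifferentiableAt ℝ (fun w => wD h w) z := by
  unfold wD
  exact (differentiableAt_const _).mul
    ((diff_fderiv_apply hh 1).sub ((differentiableAt_const _).mul (diff_fderiv_apply hh I)))

theorem diff_wDbar (hh : ContDiffAt ℝ 2 h z) : DifferentiableAt ℝ (fun w => wDbar h w) z := by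
  unfold wDbar
  exact (differentiableAt_const _).mul
    ((diff_fderiv_apply hh 1).add ((differentiableAt_const _).mul (diff_fderiv_apply hh I)))

theorem wD_wDbar_comm (hh : ContDiffAt ℝ 2 h z) :
    wDbar (fun w => wD h w) z = wD (fun w => wDbar h w) z := by
  have hsymm := hh.isSymmSndFDerivAt (by norm_num)
  have key : ∀ u v : ℂ, fderiv ℝ (fun w => fderiv ℝ h w v) z u
      = fderiv ℝ (fun w => fderiv ℝ h w u) z v := by
    intro u v
    rw [fderiv_fderiv_apply hh, fderiv_fderiv_apply hh, hsymm u v]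
  have e1 : ∀ u : ℂ, fderiv ℝ (fun w => wD h w) z u
      = (1/2 : ℂ) * (fderiv ℝ (fun w => fderiv ℝ h w 1) z u
          - I * fderiv ℝ (fun w => fderiv ℝ h w I) z u) := by
    intro u
    have : (fun w => wD h w) = fun w =>
        (1/2 : ℂ) * (fderiv ℝ h w 1 - I * fderiv ℝ h w I) := rfl
    rw [this, fderiv_const_mul (show DifferentiableAt ℝ
        (fun w => fderiv ℝ h w 1 - I * fderiv ℝ h w I) z from (diff_fderiv_apply hh 1).sub
      ((differentiableAt_const _).mul (diff_fderiv_apply hh I))),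
      fderiv_fun_sub (diff_fderiv_apply hh 1)
        (show DifferentiableAt ℝ (fun w => I * fderiv ℝ h w I) z from
          (differentiableAt_const _).mul (diff_fderiv_apply hh I)),
      fderiv_const_mul (diff_fderiv_apply hh I)]
    simp
  have e2 : ∀ u : ℂ, fderiv ℝ (fun w => wDbar h w) z u
      = (1/2 : ℂ) * (fderiv ℝ (fun w => fderiv ℝ h w 1) z u
          + I * fderiv ℝ (fun w => fderiv ℝ h w I) z u) := by
    intro u
    have : (fun w => wDbar h w) = fun w =>
        (1/2 : ℂ) * (fderiv ℝ h w 1 + I * fderiv ℝ h w I) := rfl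
    rw [this, fderiv_const_mul (show DifferentiableAt ℝ
        (fun w => fderiv ℝ h w 1 + I * fderiv ℝ h w I) z from (diff_fderiv_apply hh 1).add
      ((differentiableAt_const _).mul (diff_fderiv_apply hh I))),
      fderiv_fun_add (diff_fderiv_apply hh 1)
        (show DifferentiableAt ℝ (fun w => I * fderiv ℝ h w I) z from
          (differentiableAt_const _).mul (diff_fderiv_apply hh I)),
      fderiv_const_mul (diff_fderiv_apply hh I)]
    simp; ring
  rw [show wDbar (fun w => wD h w) z = (1/2 : ℂ) * (fderiv ℝ (fun w => wD h w) z 1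
      + I * fderiv ℝ (fun w => wD h w) z I) from rfl,
    show wD (fun w => wDbar h w) z = (1/2 : ℂ) * (fderiv ℝ (fun w => wDbar h w) z 1
      - I * fderiv ℝ (fun w => wDbar h w) z I) from rfl,
    e1 1, e1 I, e2 1, e2 I, key I 1]
  ring

end Snd

theorem wD_neg {f : ℂ → ℂ} (z : ℂ) : wD (fun w => -f w) z = -wD f z := by
  unfold wD; rw [fderiv_fun_neg]; simp; ring

theorem wD_congr {f g : ℂ → ℂ} {z : ℂ} (h : f =ᶠ[nhds z] g) : wD f z = wD g z := by
  unfold wD; rw [h.fderiv_eq]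

theorem wDbar_congr {f g : ℂ → ℂ} {z : ℂ} (h : f =ᶠ[nhds z] g) : wDbar f z = wDbar g z := by
  unfold wDbar; rw [h.fderiv_eq]

theorem fderiv_holo_comp {f h : ℂ → ℂ} {z : ℂ} (hf : DifferentiableAt ℂ f (h z))
    (hh : DifferentiableAt ℝ h z) (v : ℂ) :
    fderiv ℝ (fun w => f (h w)) z v = deriv f (h z) * fderiv ℝ h z v := by
  have h1 : fderiv ℝ (fun w => f (h w)) z = (fderiv ℝ f (h z)).comp (fderiv ℝ h z) :=
    fderiv_comp z (hf.restrictScalars ℝ) hh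
  have h2 : fderiv ℝ f (h z) = (fderiv ℂ f (h z)).restrictScalars ℝ :=
    (hf.hasFDerivAt.restrictScalars ℝ).fderiv
  have h3 : ∀ u : ℂ, fderiv ℂ f (h z) u = deriv f (h z) * u := by
    intro u
    have := (fderiv ℂ f (h z)).map_smul u (1 : ℂ)
    simp only [smul_eq_mul, mul_one] at this
    rw [this, fderiv_apply_one_eq_deriv]; ring
  rw [h1]; simp [h2, h3]

theorem wD_comp {f h : ℂ → ℂ} {z : ℂ} (hf : DifferentiableAt ℂ f (h z))
    (hh : DifferentiableAt ℝ h z) :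
    wD (fun w => f (h w)) z = deriv f (h z) * wD h z := by
  unfold wD; rw [fderiv_holo_comp hf hh, fderiv_holo_comp hf hh]; ring

theorem wDbar_comp {f h : ℂ → ℂ} {z : ℂ} (hf : DifferentiableAt ℂ f (h z))
    (hh : DifferentiableAt ℝ h z) :
    wDbar (fun w => f (h w)) z = deriv f (h z) * wDbar h z := by
  unfold wDbar; rw [fderiv_holo_comp hf hh, fderiv_holo_comp hf hh]; ring

theorem wD_mul {f g : ℂ → ℂ} {z : ℂ} (hf : DifferentiableAt ℝ f z)
    (hg : DifferentiableAt ℝ g z) :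
    wD (fun w => f w * g w) z = wD f z * g z + f z * wD g z := by
  unfold wD
  rw [fderiv_fun_mul hf hg]
  simp only [ContinuousLinearMap.add_apply, ContinuousLinearMap.smul_apply, smul_eq_mul]
  ring

theorem wDbar_mul {f g : ℂ → ℂ} {z : ℂ} (hf : DifferentiableAt ℝ f z)
    (hg : DifferentiableAt ℝ g z) :
    wDbar (fun w => f w * g w) z = wDbar f z * g z + f z * wDbar g z := by
  unfold wDbar
  rw [fderiv_fun_mul hf hg]
  simp only [ContinuousLinearMap.add_apply, ContinuousLinearMap.smul_apply, smul_eq_mul]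
  ring

/-- Proposition 4, necessary equations: if f₁, f₂ are entire, h is C² and
harmonic (∂∂̄h = 0) on the open set Ω, and ψ₁ = f₁ ∘ h, ψ₂ = f₂ ∘ h solve the
Weierstrass–Enneper system on Ω with p = |ψ₁|² + |ψ₂|², then
f₁''(h)(∂h)(∂̄h) = (∂̄p) f₂(h) + p f₂'(h) ∂̄h and
f₂''(h)(∂h)(∂̄h) = −(∂p) f₁(h) − p f₁'(h) ∂h on Ω. -/
theorem WE_harmonic_composition
    (Ω : Set ℂ) (hΩ : IsOpen Ω) (f₁ f₂ : ℂ → ℂ) (h : ℂ → ℂ)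
    (hf₁ : Differentiable ℂ f₁) (hf₂ : Differentiable ℂ f₂)
    (hh : ContDiffOn ℝ 2 h Ω)
    (hharm : ∀ z ∈ Ω, wD (fun w => wDbar h w) z = 0)
    (hWE₁ : ∀ z ∈ Ω, wD (fun w => f₁ (h w)) z =
      ((Complex.normSq (f₁ (h z)) + Complex.normSq (f₂ (h z)) : ℝ) : ℂ) * f₂ (h z))
    (hWE₂ : ∀ z ∈ Ω, wDbar (fun w => f₂ (h w)) z =
      -((Complex.normSq (f₁ (h z)) + Complex.normSq (f₂ (h z)) : ℝ) : ℂ) * f₁ (h z)) :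
    ∀ z ∈ Ω,
      deriv (deriv f₁) (h z) * (wD h z * wDbar h z)
        = wDbar (fun w => ((Complex.normSq (f₁ (h w)) + Complex.normSq (f₂ (h w)) : ℝ) : ℂ)) z
            * f₂ (h z)
          + ((Complex.normSq (f₁ (h z)) + Complex.normSq (f₂ (h z)) : ℝ) : ℂ)
            * deriv f₂ (h z) * wDbar h z ∧
      deriv (deriv f₂) (h z) * (wD h z * wDbar h z)
        = -(wD (fun w => ((Complex.normSq (f₁ (h w)) + Complex.normSq (f₂ (h w)) : ℝ) : ℂ)) z)
            * f₁ (h z)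
          - ((Complex.normSq (f₁ (h z)) + Complex.normSq (f₂ (h z)) : ℝ) : ℂ)
            * deriv f₁ (h z) * wD h z := by
  -- derivatives of entire functions are entire
  have hd₁ : Differentiable ℂ (deriv f₁) :=
    (contDiff_infty_iff_deriv.mp hf₁.contDiff).2.differentiable (by simp)
  have hd₂ : Differentiable ℂ (deriv f₂) :=
    (contDiff_infty_iff_deriv.mp hf₂.contDiff).2.differentiable (by simp)
  set P : ℂ → ℂ := fun w => ((Complex.normSq (f₁ (h w)) + Complex.normSq (f₂ (h w)) : ℝ) : ℂ)
    with hP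
  -- pointwise facts on Ω
  have hC2 : ∀ w ∈ Ω, ContDiffAt ℝ 2 h w := fun w hw => hh.contDiffAt (hΩ.mem_nhds hw)
  have hhd : ∀ w ∈ Ω, DifferentiableAt ℝ h w :=
    fun w hw => (hC2 w hw).differentiableAt two_ne_zero
  intro z hz
  have hhz : DifferentiableAt ℝ h z := hhd z hz
  have hψ₁d : DifferentiableAt ℝ (fun w => f₁ (h w)) z :=
    ((hf₁ (h z)).restrictScalars ℝ).comp z hhz
  have hψ₂d : DifferentiableAt ℝ (fun w => f₂ (h w)) z :=
    ((hf₂ (h z)).restrictScalars ℝ).comp z hhz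
  have hnsq : ∀ g : ℂ → ℂ, DifferentiableAt ℝ g z →
      DifferentiableAt ℝ (fun w => (Complex.normSq (g w) : ℝ)) z := by
    intro g hg
    simp only [Complex.normSq_apply]
    have hre : DifferentiableAt ℝ (fun w => (g w).re) z :=
      Complex.reCLM.differentiableAt.comp z hg
    have him : DifferentiableAt ℝ (fun w => (g w).im) z :=
      Complex.imCLM.differentiableAt.comp z hg
    exact (hre.mul hre).add (him.mul him)
  have hPd : DifferentiableAt ℝ P z := by
    have : DifferentiableAt ℝ
        (fun w => (Complex.normSq (f₁ (h w)) + Complex.normSq (f₂ (h w)) : ℝ)) z :=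
      (hnsq _ hψ₁d).add (hnsq _ hψ₂d)
    exact Complex.ofRealCLM.differentiableAt.comp z this
  have hd₁c : DifferentiableAt ℝ (fun w => deriv f₁ (h w)) z :=
    ((hd₁ (h z)).restrictScalars ℝ).comp z hhz
  have hd₂c : DifferentiableAt ℝ (fun w => deriv f₂ (h w)) z :=
    ((hd₂ (h z)).restrictScalars ℝ).comp z hhz
  have hwDd : DifferentiableAt ℝ (fun w => wD h w) z := diff_wD (hC2 z hz)
  have hwDbard : DifferentiableAt ℝ (fun w => wDbar h w) z := diff_wDbar (hC2 z hz)
  have hΩnhds : Ω ∈ nhds z := hΩ.mem_nhds hz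
  constructor
  · -- first equation
    have E1 : (fun w => deriv f₁ (h w) * wD h w) =ᶠ[nhds z] (fun w => P w * f₂ (h w)) := by
      filter_upwards [hΩnhds] with w hw
      rw [← wD_comp (hf₁ (h w)) (hhd w hw), hWE₁ w hw]
    have key := wDbar_congr E1
    rw [wDbar_mul hd₁c hwDd, wDbar_mul hPd hψ₂d,
      wDbar_comp (hd₁ (h z)) hhz, wDbar_comp (hf₂ (h z)) hhz,
      wD_wDbar_comm (hC2 z hz), hharm z hz] at key
    rw [show deriv (deriv f₁) (h z) * (wD h z * wDbar h z)
        = deriv (deriv f₁) (h z) * wDbar h z * wD h z + deriv f₁ (h z) * 0 by ring, key]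
    ring
  · -- second equation
    have E2 : (fun w => deriv f₂ (h w) * wDbar h w) =ᶠ[nhds z]
        (fun w => -(P w * f₁ (h w))) := by
      filter_upwards [hΩnhds] with w hw
      rw [← wDbar_comp (hf₂ (h w)) (hhd w hw), hWE₂ w hw]
      ring
    have key := wD_congr E2
    rw [wD_mul hd₂c hwDbard, wD_neg, wD_mul hPd hψ₁d,
      wD_comp (hd₂ (h z)) hhz, wD_comp (hf₁ (h z)) hhz, hharm z hz] at key
    rw [show deriv (deriv f₂) (h z) * (wD h z * wDbar h z)
        = deriv (deriv f₂) (h z) * wD h z * wDbar h z + deriv f₂ (h z) * 0 by ring, key]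
    ring
end

section
/- (Proposition 6, part 1: constancy of p under the double constraint.) Let Ω ⊆ ℂ be open and connected, and let (ψ₁, ψ₂) be a pair of continuously real-differentiable complex-valued functions solving the generalized Weierstrass–Enneper system ∂ψ₁ = p ψ₂, ∂̄ψ₂ = −p ψ₁ on Ω, where p = |ψ₁|² + |ψ₂|². If the two differential constraints ψ₁ ∂ψ̄₁ + ψ̄₂ ∂ψ₂ = 0 and ψ̄₁ ∂̄ψ₁ + ψ₂ ∂̄ψ̄₂ = 0 hold on Ω, then p is constant on Ω: there exists p₀ ≥ 0 with |ψ₁|² + |ψ₂|² = p₀ everywhere on Ω. -/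
open Complex

lemma diff_conj {f : ℂ → ℂ} {z : ℂ} (hf : DifferentiableAt ℝ f z) :
    DifferentiableAt ℝ (fun u => (starRingEnd ℂ) (f u)) z :=
  (Complex.conjCLE.differentiableAt).comp z hf

lemma fderiv_conj_apply {f : ℂ → ℂ} {z : ℂ} (hf : DifferentiableAt ℝ f z) (v : ℂ) :
    fderiv ℝ (fun u => (starRingEnd ℂ) (f u)) z v = (starRingEnd ℂ) (fderiv ℝ f z v) := by
  have h := (Complex.conjCLE.toContinuousLinearMap.hasFDerivAt.comp z hf.hasFDerivAt).fderiv
  have : fderiv ℝ (fun u => (starRingEnd ℂ) (f u)) z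
      = Complex.conjCLE.toContinuousLinearMap.comp (fderiv ℝ f z) := by
    rw [← h]; rfl
  rw [this]; rfl


/-- Proposition 6, part 1: on an open connected Ω, if a C¹ solution
(ψ₁, ψ₂) of the Weierstrass–Enneper system satisfies the two differential constraints
ψ₁ ∂ψ̄₁ + ψ̄₂ ∂ψ₂ = 0 and ψ̄₁ ∂̄ψ₁ + ψ₂ ∂̄ψ̄₂ = 0 on Ω, then p = |ψ₁|² + |ψ₂|²
is a nonnegative constant p₀ on Ω. -/
theorem WE_double_constraint_p_constant
    (Ω : Set ℂ) (hΩ : IsOpen Ω) (hconn : IsConnected Ω) (ψ₁ ψ₂ : ℂ → ℂ)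
    (hψ₁ : ContDiffOn ℝ 1 ψ₁ Ω) (hψ₂ : ContDiffOn ℝ 1 ψ₂ Ω)
    (hWE₁ : ∀ z ∈ Ω, wD ψ₁ z =
      ((Complex.normSq (ψ₁ z) + Complex.normSq (ψ₂ z) : ℝ) : ℂ) * ψ₂ z)
    (hWE₂ : ∀ z ∈ Ω, wDbar ψ₂ z =
      -((Complex.normSq (ψ₁ z) + Complex.normSq (ψ₂ z) : ℝ) : ℂ) * ψ₁ z)
    (hc₁ : ∀ z ∈ Ω, ψ₁ z * wD (fun u => (starRingEnd ℂ) (ψ₁ u)) z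
      + (starRingEnd ℂ) (ψ₂ z) * wD ψ₂ z = 0)
    (hc₂ : ∀ z ∈ Ω, (starRingEnd ℂ) (ψ₁ z) * wDbar ψ₁ z
      + ψ₂ z * wDbar (fun u => (starRingEnd ℂ) (ψ₂ u)) z = 0) :
    ∃ p₀ : ℝ, 0 ≤ p₀ ∧
      ∀ z ∈ Ω, Complex.normSq (ψ₁ z) + Complex.normSq (ψ₂ z) = p₀ := by
  set F : ℂ → ℂ := fun u => ψ₁ u * (starRingEnd ℂ) (ψ₁ u) + ψ₂ u * (starRingEnd ℂ) (ψ₂ u)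
    with hF
  have hd1 : ∀ z ∈ Ω, DifferentiableAt ℝ ψ₁ z := fun z hz =>
    (hψ₁.contDiffAt (hΩ.mem_nhds hz)).differentiableAt one_ne_zero
  have hd2 : ∀ z ∈ Ω, DifferentiableAt ℝ ψ₂ z := fun z hz =>
    (hψ₂.contDiffAt (hΩ.mem_nhds hz)).differentiableAt one_ne_zero
  have hdF : ∀ z ∈ Ω, DifferentiableAt ℝ F z := fun z hz =>
    ((hd1 z hz).mul (diff_conj (hd1 z hz))).add ((hd2 z hz).mul (diff_conj (hd2 z hz)))
  -- fderiv of F vanishes on Ω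
  have hkey : ∀ z ∈ Ω, fderiv ℝ F z = 0 := by
    intro z hz
    have h1 := hd1 z hz
    have h2 := hd2 z hz
    set P : ℂ := ((Complex.normSq (ψ₁ z) + Complex.normSq (ψ₂ z) : ℝ) : ℂ) with hP
    set a1 := fderiv ℝ ψ₁ z 1
    set b1 := fderiv ℝ ψ₁ z Complex.I
    set a2 := fderiv ℝ ψ₂ z 1
    set b2 := fderiv ℝ ψ₂ z Complex.I
    have hPc : (starRingEnd ℂ) P = P := by rw [hP]; exact Complex.conj_ofReal _
    have e1 : (1 / 2 : ℂ) * (a1 - Complex.I * b1) = P * ψ₂ z := hWE₁ z hz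
    have e2 : (1 / 2 : ℂ) * (a2 + Complex.I * b2) = -P * ψ₁ z := hWE₂ z hz
    have e1c : (1 / 2 : ℂ) * ((starRingEnd ℂ) a1 + Complex.I * (starRingEnd ℂ) b1)
        = P * (starRingEnd ℂ) (ψ₂ z) := by
      have := congrArg (starRingEnd ℂ) e1
      simpa [map_mul, map_sub, map_add, Complex.conj_I, hPc, mul_comm, mul_left_comm,
        sub_eq_add_neg, map_ofNat] using this
    have e2c : (1 / 2 : ℂ) * ((starRingEnd ℂ) a2 - Complex.I * (starRingEnd ℂ) b2)
        = -P * (starRingEnd ℂ) (ψ₁ z) := by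
      have := congrArg (starRingEnd ℂ) e2
      simpa [map_mul, map_sub, map_add, map_neg, Complex.conj_I, hPc, mul_comm, mul_left_comm,
        sub_eq_add_neg, map_ofNat] using this
    have e3 : ψ₁ z * ((1 / 2 : ℂ) * ((starRingEnd ℂ) a1 - Complex.I * (starRingEnd ℂ) b1))
        + (starRingEnd ℂ) (ψ₂ z) * ((1 / 2 : ℂ) * (a2 - Complex.I * b2)) = 0 := by
      have := hc₁ z hz
      simpa [wD, fderiv_conj_apply h1] using this
    have e4 : (starRingEnd ℂ) (ψ₁ z) * ((1 / 2 : ℂ) * (a1 + Complex.I * b1))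
        + ψ₂ z * ((1 / 2 : ℂ) * ((starRingEnd ℂ) a2 + Complex.I * (starRingEnd ℂ) b2)) = 0 := by
      have := hc₂ z hz
      simpa [wDbar, fderiv_conj_apply h2] using this
    have hFapp : ∀ v : ℂ, fderiv ℝ F z v
        = a1 * (starRingEnd ℂ) (ψ₁ z) * 0 + fderiv ℝ F z v := by intro v; ring_nf
    have hmul : ∀ v : ℂ, fderiv ℝ F z v
        = fderiv ℝ ψ₁ z v * (starRingEnd ℂ) (ψ₁ z) + ψ₁ z * (starRingEnd ℂ) (fderiv ℝ ψ₁ z v)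
        + (fderiv ℝ ψ₂ z v * (starRingEnd ℂ) (ψ₂ z)
            + ψ₂ z * (starRingEnd ℂ) (fderiv ℝ ψ₂ z v)) := by
      intro v
      have hA : fderiv ℝ (fun u => ψ₁ u * (starRingEnd ℂ) (ψ₁ u)) z
          = ψ₁ z • fderiv ℝ (fun u => (starRingEnd ℂ) (ψ₁ u)) z
            + (starRingEnd ℂ) (ψ₁ z) • fderiv ℝ ψ₁ z := fderiv_mul h1 (diff_conj h1)
      have hB : fderiv ℝ (fun u => ψ₂ u * (starRingEnd ℂ) (ψ₂ u)) z
          = ψ₂ z • fderiv ℝ (fun u => (starRingEnd ℂ) (ψ₂ u)) z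
            + (starRingEnd ℂ) (ψ₂ z) • fderiv ℝ ψ₂ z := fderiv_mul h2 (diff_conj h2)
      have hAB : fderiv ℝ F z = fderiv ℝ (fun u => ψ₁ u * (starRingEnd ℂ) (ψ₁ u)) z
          + fderiv ℝ (fun u => ψ₂ u * (starRingEnd ℂ) (ψ₂ u)) z :=
        fderiv_add (h1.mul (diff_conj h1)) (h2.mul (diff_conj h2))
      rw [hF] at hAB ⊢
      rw [hAB, hA, hB]
      simp [ContinuousLinearMap.add_apply, ContinuousLinearMap.smul_apply,
        fderiv_conj_apply h1, fderiv_conj_apply h2, smul_eq_mul]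
      ring
    have g1 : fderiv ℝ F z 1 = 0 := by
      rw [hmul 1]
      linear_combination e4 + ψ₁ z * e1c + (starRingEnd ℂ) (ψ₂ z) * e2 + e3
        + (starRingEnd ℂ) (ψ₁ z) * e1 + ψ₂ z * e2c
    have g2 : fderiv ℝ F z Complex.I = 0 := by
      rw [hmul Complex.I]
      linear_combination (-Complex.I) * (e4 + ψ₁ z * e1c + (starRingEnd ℂ) (ψ₂ z) * e2)
        + Complex.I * (e3 + (starRingEnd ℂ) (ψ₁ z) * e1 + ψ₂ z * e2c)
        + (b1 * (starRingEnd ℂ) (ψ₁ z) + ψ₁ z * (starRingEnd ℂ) b1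
          + b2 * (starRingEnd ℂ) (ψ₂ z) + ψ₂ z * (starRingEnd ℂ) b2) * Complex.I_sq
    ext v
    have hv : v = (v.re : ℝ) • (1 : ℂ) + (v.im : ℝ) • Complex.I := by
      simp [Complex.real_smul]
    have hlin : (fderiv ℝ F z) v
        = (v.re : ℝ) • (fderiv ℝ F z) 1 + (v.im : ℝ) • (fderiv ℝ F z) Complex.I := by
      conv_lhs => rw [hv]
      rw [map_add, map_smul, map_smul]
    rw [ContinuousLinearMap.zero_apply, hlin, g1, g2, smul_zero, smul_zero, add_zero]
  -- F is locally constant, hence constant on connected Ω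
  obtain ⟨z₀, hz₀⟩ := hconn.nonempty
  set c : ℂ := F z₀ with hc
  have hcontF : ContinuousOn F Ω := fun z hz => (hdF z hz).continuousAt.continuousWithinAt
  have hloc : ∀ z ∈ Ω, F z = c → ∃ ε > 0, Metric.ball z ε ⊆ {w | w ∈ Ω ∧ F w = c} := by
    intro z hz hzc
    obtain ⟨ε, hε, hball⟩ := Metric.isOpen_iff.1 hΩ z hz
    refine ⟨ε, hε, fun w hw => ⟨hball hw, ?_⟩⟩
    have hconst := (convex_ball z ε).is_const_of_fderivWithin_eq_zero
      (f := F) (𝕜 := ℝ)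
      (fun u hu => ((hdF u (hball hu)).differentiableWithinAt))
      (fun u hu => by
        rw [fderivWithin_of_isOpen Metric.isOpen_ball hu]
        exact hkey u (hball hu))
      hw (Metric.mem_ball_self hε)
    rw [hconst, hzc]
  have hall : ∀ z ∈ Ω, F z = c := by
    set V₁ : Set ℂ := {w | w ∈ Ω ∧ F w = c} with hV₁
    set V₂ : Set ℂ := {w | w ∈ Ω ∧ F w ≠ c} with hV₂
    have hV₁open : IsOpen V₁ := by
      rw [Metric.isOpen_iff]
      intro z hzz
      exact hloc z hzz.1 hzz.2
    have hV₂open : IsOpen V₂ := by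
      have : V₂ = Ω ∩ F ⁻¹' {c}ᶜ := by
        ext w
        exact Iff.rfl
      rw [this]
      exact hcontF.isOpen_inter_preimage hΩ (isOpen_compl_singleton)
    by_contra hbad
    push_neg at hbad
    obtain ⟨z₁, hz₁, hz₁c⟩ := hbad
    have hsub : Ω ⊆ V₁ ∪ V₂ := fun w hw => by
      by_cases h : F w = c
      · exact Or.inl ⟨hw, h⟩
      · exact Or.inr ⟨hw, h⟩
    have hne := hconn.isPreconnected V₁ V₂ hV₁open hV₂open hsub
      ⟨z₀, hz₀, hz₀, rfl⟩ ⟨z₁, hz₁, hz₁, hz₁c⟩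
    obtain ⟨w, _, hw1, hw2⟩ := hne
    exact hw2.2 hw1.2
  refine ⟨Complex.normSq (ψ₁ z₀) + Complex.normSq (ψ₂ z₀),
    add_nonneg (Complex.normSq_nonneg _) (Complex.normSq_nonneg _), fun z hz => ?_⟩
  have h1 : F z = ((Complex.normSq (ψ₁ z) + Complex.normSq (ψ₂ z) : ℝ) : ℂ) := by
    simp [hF, Complex.mul_conj, Complex.ofReal_add]
  have h2 : F z₀ = ((Complex.normSq (ψ₁ z₀) + Complex.normSq (ψ₂ z₀) : ℝ) : ℂ) := by
    simp [hF, Complex.mul_conj, Complex.ofReal_add]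
  have := hall z hz
  rw [h1, hc, h2] at this
  exact_mod_cast this
end
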